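/- arXiv:2302.13686 — 2 statements merged into one kernel-verified Lean document; each statement's English description precedes it below -/
import Mathlib

section
/- Let n ≥ 2, I = {0,1,…,n}, and let A be the affine Cartan matrix of type C_n^{(1)}: a_{ii} = 2, a_{01} = -1, a_{10} = -2, a_{i,i+1} = a_{i+1,i} = -1 for 1 ≤ i ≤ n−2, a_{n-1,n} = -2, a_{n,n-1} = -1, and all other entries 0; set q_0 = q_n = p^4 and q_i = p^2 for 1 ≤ i ≤ n−1. Define z_i = x_{i-1}^{-1} x_i for 1 ≤ i ≤ n (so that y_0 = z_1^{-2}, y_i = z_i z_{i+1}^{-1} for 1 ≤ i ≤ n−1, and y_n = z_n^2). Then for b = p^{-1} and also for b = ı·p^{-1}, the tuple φ_0 = {p^4·b·z_1^{-1}}_0·{b·z_1}_0, φ_i = {p^2·b·z_i}_i·{b·z_{i+1}}_i for 1 ≤ i ≤ n−1, and φ_n = {p^4·b·z_n}_n·{b·z_n^{-1}}_n satisfies the shiftability system for A. -/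
noncomputable section

/-- The Laurent polynomial algebra `ℂ[x_i^{±1} : i ∈ ι]`, realized as the group algebra of the
free abelian group `ι → ℤ` over `ℂ` (for `ι` finite this is `ℤ^ι`). -/
abbrev LaurentAlg (ι : Type*) : Type _ := AddMonoidAlgebra ℂ (ι → ℤ)

/-- The monomial `∏_i x_i^{μ i}`. -/
def mono {ι : Type*} (μ : ι → ℤ) : LaurentAlg ι := AddMonoidAlgebra.single μ 1

lemma mono_zero {ι : Type*} : mono (0 : ι → ℤ) = 1 := rfl

lemma mono_add {ι : Type*} (μ ν : ι → ℤ) : mono (μ + ν) = mono μ * mono ν := by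
  simp [mono, AddMonoidAlgebra.single_mul_single]

/-- The auxiliary monoid homomorphism `μ ↦ c^{-μ i} · x^μ` underlying `ζ_i`. -/
def zetaHom {ι : Type*} (c : ℂˣ) (i : ι) : Multiplicative (ι → ℤ) →* LaurentAlg ι where
  toFun μ := ((c ^ (-(Multiplicative.toAdd μ i)) : ℂˣ) : ℂ) • mono (Multiplicative.toAdd μ)
  map_one' := by
    simp [mono_zero]
  map_mul' μ ν := by
    show ((c ^ (-(Multiplicative.toAdd (μ * ν) i)) : ℂˣ) : ℂ) • mono (Multiplicative.toAdd (μ * ν)) = _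
    have h : Multiplicative.toAdd (μ * ν) = Multiplicative.toAdd μ + Multiplicative.toAdd ν := rfl
    rw [h, mono_add, Pi.add_apply, neg_add, zpow_add, Units.val_mul, mul_smul,
      smul_mul_assoc, mul_smul_comm]

/-- The `ℂ`-algebra endomorphism `ζ_i` of the Laurent polynomial algebra determined by
`ζ_i(x_j) = c^{-δ_{ij}} x_j` (its inverse automorphism is `zeta c⁻¹ i`). -/
def zeta {ι : Type*} (c : ℂˣ) (i : ι) : LaurentAlg ι →ₐ[ℂ] LaurentAlg ι :=
  AddMonoidAlgebra.lift ℂ (LaurentAlg ι) (ι → ℤ) (zetaHom c i)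

/-- The element `{u}_s = (u - u⁻¹)/(s - s⁻¹)` for the unit `u = c · x^μ` of the Laurent
polynomial algebra (whose inverse is `c⁻¹ · x^{-μ}`). -/
def brk {ι : Type*} (s c : ℂ) (μ : ι → ℤ) : LaurentAlg ι :=
  ((s - s⁻¹)⁻¹ : ℂ) • (c • mono μ - c⁻¹ • mono (-μ))

/-- The shiftability system (4.1) for the integer matrix `a` with parameters `q i`:
`ζ_i(φ_i) − φ_i = {y_i}_i` for all `i`, and `φ_i φ_j = ζ_j^{-1}(φ_i)·ζ_i^{-1}(φ_j)` for `i ≠ j`,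
where `y_i = ∏_j x_j^{a j i}`. -/
def ShiftSystem {ι : Type*} (a : ι → ι → ℤ) (q : ι → ℂˣ) (φ : ι → LaurentAlg ι) : Prop :=
  (∀ i, zeta (q i) i (φ i) - φ i = brk ((q i : ℂ)) 1 (fun j => a j i)) ∧
  (∀ i j, i ≠ j → φ i * φ j = zeta (q j)⁻¹ j (φ i) * zeta (q i)⁻¹ i (φ j))

/-- The exponent vector of the single variable `x_k`. -/
def xvec {ι : Type*} [DecidableEq ι] (k : ι) : ι → ℤ := fun j => if j = k then 1 else 0

end

/-! Each `φ_i` has the shape `{q_i b x^μ}_i {b x^ν}_i` with `μ i = 1` and `ν i = -1`, so `ζ_i`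
moves the factor `q_i` from one bracket to the other, and the difference collapses to
`{x^(μ - ν)}_i = {y_i}_i`. For `|i - j| ≥ 2`, `φ_i` and `φ_j` do not involve `x_j`, resp. `x_i`, and
for two adjacent interior nodes both sides of the commutation relation are the same four brackets.
At the two ends the relation reduces to an identity between products of two brackets in the same
monomial `w`. Such a product `{d w} {e w}` only depends on `d e` and `d / e + e / d`; with
`ε = b² p² = ±1` this gives `{ε d w} {e w} = {ε e w} {d w}`, which is exactly what is needed,
since `b⁻¹ = ε p² b`. -/

noncomputable section Brackets

variable {ι : Type*}

theorem zeta_mono (c : ℂˣ) (i : ι) (μ : ι → ℤ) :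
    zeta c i (mono μ) = ((c : ℂ) ^ (-μ i)) • mono μ := by
  simp [zeta, mono, zetaHom, Units.val_zpow_eq_zpow_val]

theorem zeta_brk (c : ℂˣ) (i : ι) (s d : ℂ) (μ : ι → ℤ) :
    zeta c i (brk s d μ) = brk s ((c : ℂ) ^ (-μ i) * d) μ := by
  simp only [brk, map_smul, map_sub, zeta_mono, smul_smul, Pi.neg_apply, neg_neg, mul_inv,
    ← zpow_neg]
  ring_nf

theorem zeta_inv_brk (c : ℂˣ) (i : ι) (s d : ℂ) (μ : ι → ℤ) :
    zeta c⁻¹ i (brk s d μ) = brk s ((c : ℂ) ^ μ i * d) μ := by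
  rw [zeta_brk, Units.val_inv_eq_inv_val, inv_zpow', neg_neg]

theorem zeta_brk_of_apply_eq_zero (c : ℂˣ) {i : ι} (s d : ℂ) {μ : ι → ℤ} (h : μ i = 0) :
    zeta c i (brk s d μ) = brk s d μ := by
  rw [zeta_brk, h, neg_zero, zpow_zero, one_mul]

theorem brk_neg (s d : ℂ) (μ : ι → ℤ) : brk s d (-μ) = -brk s d⁻¹ μ := by
  simp only [brk, neg_neg, inv_inv]
  module

theorem brk_mul_brk (s t d e : ℂ) (μ : ι → ℤ) :
    brk s d μ * brk t e μ = ((s - s⁻¹)⁻¹ * (t - t⁻¹)⁻¹) •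
      ((d * e) • mono (μ + μ) - (d * e⁻¹ + d⁻¹ * e) • 1 + (d⁻¹ * e⁻¹) • mono (-μ + -μ)) := by
  simp only [brk, smul_sub, smul_smul, smul_mul_assoc, mul_smul_comm, sub_mul, mul_sub,
    ← mono_add, neg_add_cancel, add_neg_cancel, mono_zero]
  module

theorem brk_mul_brk_exchange {ε : ℂ} (hε : ε ^ 2 = 1) (S s d e : ℂ) (μ : ι → ℤ) :
    brk S (ε * d) μ * brk s e μ = brk S (ε * e) μ * brk s d μ := by
  have hε' : ε⁻¹ = ε := inv_eq_of_mul_eq_one_right (by rw [← sq, hε])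
  simp only [brk_mul_brk, mul_inv, hε']
  congr 1
  module

theorem brk_mul_brk_swap (S s d e : ℂ) (μ : ι → ℤ) :
    brk S d μ * brk s e μ = brk S e μ * brk s d μ := by
  simpa using brk_mul_brk_exchange (one_pow 2) S s d e μ

def brkPair (c : ℂˣ) (b : ℂ) (μ ν : ι → ℤ) : LaurentAlg ι := brk c (c * b) μ * brk c b ν

theorem zeta_brkPair_sub_self (c : ℂˣ) {i : ι} {e : ℂ} (he : e ≠ 0) {μ ν : ι → ℤ}
    (hμ : μ i = 1) (hν : ν i = -1) :
    zeta c i (brkPair c e μ ν) - brkPair c e μ ν = brk c 1 (μ - ν) := by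
  have hc : (c : ℂ) ≠ 0 := c.ne_zero
  rw [brkPair, map_mul, zeta_brk, zeta_brk, hμ, hν, neg_neg, zpow_one, zpow_neg_one,
    inv_mul_cancel_left₀ hc]
  simp only [brk, smul_sub, smul_smul, smul_mul_assoc, mul_smul_comm, sub_mul, mul_sub,
    ← mono_add, inv_one, one_smul, sub_eq_add_neg μ ν, neg_add, neg_neg]
  set k := ((c : ℂ) - (c : ℂ)⁻¹)⁻¹
  -- `k` vanishes when `c ^ 2 = 1`, so instead of cancelling `k⁻¹` we use `k * k * k⁻¹ = k`
  have hk : k ^ 2 * ((c : ℂ) ^ 2 - 1) = k * c := by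
    have h := mul_self_mul_inv k
    rw [inv_inv] at h
    linear_combination (c : ℂ) * h + k ^ 2 * mul_inv_cancel₀ hc
  clear_value k
  match_scalars <;> field_simp
  · ring
  · linear_combination -hk
  · linear_combination hk
  · ring

theorem zeta_brkPair_of_apply_eq_zero (c c' : ℂˣ) (b : ℂ) {i : ι} {μ ν : ι → ℤ} (hμ : μ i = 0)
    (hν : ν i = 0) : zeta c i (brkPair c' b μ ν) = brkPair c' b μ ν := by
  rw [brkPair, map_mul, zeta_brk_of_apply_eq_zero _ _ _ hμ, zeta_brk_of_apply_eq_zero _ _ _ hν]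

def ShiftCommute (ci cj : ℂˣ) (i j : ι) (φi φj : LaurentAlg ι) : Prop :=
  φi * φj = zeta cj⁻¹ j φi * zeta ci⁻¹ i φj

theorem ShiftCommute.symm {ci cj : ℂˣ} {i j : ι} {φi φj : LaurentAlg ι}
    (h : ShiftCommute ci cj i j φi φj) : ShiftCommute cj ci j i φj φi := by
  rw [ShiftCommute, mul_comm, h, mul_comm]

theorem shiftCommute_start (s : ℂˣ) {b : ℂ} (hb : (b ^ 2 * s) ^ 2 = 1) {i j : ι} {α β : ι → ℤ}
    (hαi : α i = -1) (hαj : α j = 1) (hβi : β i = 0) :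
    ShiftCommute (s ^ 2) s i j (brkPair (s ^ 2) b (-α) α) (brkPair s b α β) := by
  have hs : (s : ℂ) ≠ 0 := s.ne_zero
  simp only [ShiftCommute, brkPair, map_mul, zeta_inv_brk, Pi.neg_apply, hαi, hαj, hβi,
    zpow_one, zpow_neg, zpow_zero, one_mul]
  push_cast
  set ε := b ^ 2 * s
  have h₁ : (s : ℂ)⁻¹ * (s ^ 2 * b) = s * b := by field_simp
  have h₂ : ((s : ℂ) ^ 2)⁻¹ * (s * b) = (s : ℂ)⁻¹ * b := by field_simp
  have h₃ : ((s : ℂ) ^ 2 * b)⁻¹ = ε * ((s : ℂ)⁻¹ * b) :=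
    inv_eq_of_mul_eq_one_right (by field_simp; linear_combination hb)
  have h₄ : ((s : ℂ) * b)⁻¹ = ε * b :=
    inv_eq_of_mul_eq_one_right (by linear_combination hb)
  rw [h₁, h₂]
  calc _ = brk (↑s ^ 2) (↑s ^ 2 * b) (-α) * (brk (↑s ^ 2) b α * brk ↑s (↑s * b) α) *
        brk (↑s) b β := by ring
    _ = brk (↑s ^ 2) (↑s * b) α * -(brk (↑s ^ 2) (ε * ((s : ℂ)⁻¹ * b)) α * brk ↑s b α) *
        brk (↑s) b β := by rw [brk_mul_brk_swap, brk_neg, h₃]; ring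
    _ = brk (↑s ^ 2) (↑s * b) α * -(brk (↑s ^ 2) (ε * b) α * brk ↑s ((s : ℂ)⁻¹ * b) α) *
        brk (↑s) b β := by rw [brk_mul_brk_exchange hb]
    _ = _ := by rw [brk_neg, h₄]; ring

theorem shiftCommute_end (s : ℂˣ) {b : ℂ} (hb : (b ^ 2 * s) ^ 2 = 1) {i j : ι} {μ α : ι → ℤ}
    (hμj : μ j = 0) (hαi : α i = -1) (hαj : α j = 1) :
    ShiftCommute s (s ^ 2) i j (brkPair s b μ α) (brkPair (s ^ 2) b α (-α)) := by
  have hs : (s : ℂ) ≠ 0 := s.ne_zero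
  simp only [ShiftCommute, brkPair, map_mul, zeta_inv_brk, Pi.neg_apply, hμj, hαi, hαj,
    zpow_one, zpow_neg, zpow_zero, one_mul, inv_inv]
  push_cast
  set ε := b ^ 2 * s
  have h₁ : (s : ℂ)⁻¹ * (s ^ 2 * b) = s * b := by field_simp
  have h₃ : b⁻¹ = ε * (s * b) := inv_eq_of_mul_eq_one_right (by linear_combination hb)
  have h₄ : ((s : ℂ) * b)⁻¹ = ε * b := inv_eq_of_mul_eq_one_right (by linear_combination hb)
  rw [h₁]
  calc _ = brk (↑s) (↑s * b) μ * (brk ↑s b α * brk (↑s ^ 2) (↑s ^ 2 * b) α) *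
        brk (↑s ^ 2) b (-α) := by ring
    _ = brk (↑s) (↑s * b) μ * brk ↑s (↑s ^ 2 * b) α *
        -(brk (↑s ^ 2) (ε * (s * b)) α * brk (↑s ^ 2) b α) := by
      rw [brk_mul_brk_swap, brk_neg, h₃]; ring
    _ = brk (↑s) (↑s * b) μ * brk ↑s (↑s ^ 2 * b) α *
        -(brk (↑s ^ 2) (ε * b) α * brk (↑s ^ 2) (s * b) α) := by
      rw [brk_mul_brk_exchange hb]
    _ = _ := by rw [brk_neg, h₄]; ring

theorem shiftCommute_middle (s : ℂˣ) (b : ℂ) {i j : ι} {μ α β : ι → ℤ}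
    (hμj : μ j = 0) (hαi : α i = -1) (hαj : α j = 1) (hβi : β i = 0) :
    ShiftCommute s s i j (brkPair s b μ α) (brkPair s b α β) := by
  simp only [ShiftCommute, brkPair, map_mul, zeta_inv_brk, hμj, hαi, hαj, hβi,
    zpow_one, zpow_neg, zpow_zero, one_mul, inv_mul_cancel_left₀ s.ne_zero]
  ring

end Brackets

noncomputable section CnAff

variable {n : ℕ}

theorem Fin.val_add_one_of_val_ne {k : Fin (n + 1)} (h : (k : ℕ) ≠ n) :
    ((k + 1 : Fin (n + 1)) : ℕ) = k + 1 :=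
  Fin.val_add_one_of_lt (Fin.lt_def.2 (by simp only [Fin.val_last]; omega))

theorem Fin.val_one_of_ne_zero (hn : n ≠ 0) : ((1 : Fin (n + 1)) : ℕ) = 1 := by
  rw [Fin.val_one', Nat.mod_eq_of_lt (by omega)]

-- `k - 1` wraps around in `Fin (n + 1)`: this is the exponent of `z_k` only for `k ≠ 0`.
def zvec (k : Fin (n + 1)) : Fin (n + 1) → ℤ := xvec k - xvec (k - 1)

theorem zvec_apply {k : Fin (n + 1)} (hk : (k : ℕ) ≠ 0) (m : Fin (n + 1)) :
    zvec k m = (if (m : ℕ) = k then 1 else 0) - (if (m : ℕ) = k - 1 then 1 else 0) := by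
  simp only [zvec, xvec, Pi.sub_apply, Fin.ext_iff,
    Fin.val_sub_one_of_ne_zero (Fin.ne_of_val_ne hk)]

theorem zvec_apply_self {k : Fin (n + 1)} (hk : (k : ℕ) ≠ 0) : zvec k k = 1 := by
  rw [zvec_apply hk, if_pos rfl, if_neg (by omega), sub_zero]

theorem zvec_apply_of_val_add_one_eq {k m : Fin (n + 1)} (h : (m : ℕ) + 1 = k) :
    zvec k m = -1 := by
  rw [zvec_apply (by omega), if_neg (by omega), if_pos (by omega), zero_sub]

theorem zvec_apply_of_val_ne {k m : Fin (n + 1)} (hk : (k : ℕ) ≠ 0) (h₁ : (m : ℕ) ≠ k)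
    (h₂ : (m : ℕ) + 1 ≠ k) : zvec k m = 0 := by
  rw [zvec_apply hk, if_neg h₁, if_neg (by omega), sub_zero]

variable (n) (p : ℂˣ) (b : ℂ)

def cnAffMatrix : Fin (n + 1) → Fin (n + 1) → ℤ := fun i j =>
  if i = j then 2
  else if (i : ℕ) = 0 ∧ (j : ℕ) = 1 then -1
  else if (i : ℕ) = 1 ∧ (j : ℕ) = 0 then -2
  else if (i : ℕ) = n - 1 ∧ (j : ℕ) = n then -2
  else if (i : ℕ) = n ∧ (j : ℕ) = n - 1 then -1
  else if (j : ℕ) = (i : ℕ) + 1 ∨ (i : ℕ) = (j : ℕ) + 1 then -1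
  else 0

def cnAffParam : Fin (n + 1) → ℂˣ := fun i => if (i : ℕ) = 0 ∨ (i : ℕ) = n then p ^ 4 else p ^ 2

def cnAffPhi : Fin (n + 1) → LaurentAlg (Fin (n + 1)) := fun i =>
  if (i : ℕ) = 0 then
    brk ((p : ℂ) ^ 4) ((p : ℂ) ^ 4 * b) (xvec 0 - xvec 1) *
      brk ((p : ℂ) ^ 4) b (xvec 1 - xvec 0)
  else if (i : ℕ) = n then
    brk ((p : ℂ) ^ 4) ((p : ℂ) ^ 4 * b) (xvec i - xvec (i - 1)) *
      brk ((p : ℂ) ^ 4) b (xvec (i - 1) - xvec i)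
  else
    brk ((p : ℂ) ^ 2) ((p : ℂ) ^ 2 * b) (xvec i - xvec (i - 1)) *
      brk ((p : ℂ) ^ 2) b (xvec (i + 1) - xvec i)

variable {n}

theorem cnAffParam_zero : cnAffParam n p 0 = (p ^ 2) ^ 2 := by
  rw [cnAffParam, if_pos (Or.inl (Fin.val_zero (n + 1))), ← pow_mul]

theorem cnAffParam_last : cnAffParam n p (Fin.last n) = (p ^ 2) ^ 2 := by
  rw [cnAffParam, if_pos (Or.inr (Fin.val_last n)), ← pow_mul]

theorem cnAffParam_of_ne {k : Fin (n + 1)} (h₀ : (k : ℕ) ≠ 0) (hl : (k : ℕ) ≠ n) :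
    cnAffParam n p k = p ^ 2 := by
  rw [cnAffParam, if_neg (by omega)]

theorem cnAffPhi_zero : cnAffPhi n p b 0 = brkPair ((p ^ 2) ^ 2) b (-zvec 1) (zvec 1) := by
  simp only [cnAffPhi, Fin.val_zero, if_true, brkPair, zvec, sub_self, neg_sub]
  push_cast; ring_nf

theorem cnAffPhi_last (hn : n ≠ 0) :
    cnAffPhi n p b (Fin.last n) =
      brkPair ((p ^ 2) ^ 2) b (zvec (Fin.last n)) (-zvec (Fin.last n)) := by
  simp only [cnAffPhi, Fin.val_last, if_neg hn, if_true, brkPair, zvec, neg_sub]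
  push_cast; ring_nf

theorem cnAffPhi_of_ne {k : Fin (n + 1)} (h₀ : (k : ℕ) ≠ 0) (hl : (k : ℕ) ≠ n) :
    cnAffPhi n p b k = brkPair (p ^ 2) b (zvec k) (zvec (k + 1)) := by
  simp only [cnAffPhi, if_neg h₀, if_neg hl, brkPair, zvec, add_sub_cancel_right]
  push_cast; rfl

theorem cnAffMatrix_col_zero (hn : 2 ≤ n) :
    (fun m => cnAffMatrix n m 0) = -zvec 1 - zvec 1 := by
  have h₁ := Fin.val_one_of_ne_zero (n := n) (by omega)
  funext m
  simp only [cnAffMatrix, Pi.sub_apply, Pi.neg_apply, zvec_apply (k := 1) (by rw [h₁]; omega),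
    Fin.ext_iff, Fin.val_zero, h₁]
  split_ifs <;> grind

theorem cnAffMatrix_col_last (hn : 2 ≤ n) :
    (fun m => cnAffMatrix n m (Fin.last n)) = zvec (Fin.last n) - -zvec (Fin.last n) := by
  funext m
  simp only [cnAffMatrix, Pi.sub_apply, Pi.neg_apply, zvec_apply (k := Fin.last n) (by simp; omega),
    Fin.ext_iff, Fin.val_last]
  split_ifs <;> grind

theorem cnAffMatrix_col_of_ne (hn : 2 ≤ n) {k : Fin (n + 1)} (h₀ : (k : ℕ) ≠ 0)
    (hl : (k : ℕ) ≠ n) : (fun m => cnAffMatrix n m k) = zvec k - zvec (k + 1) := by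
  have hk := Fin.val_add_one_of_val_ne hl
  funext m
  simp only [cnAffMatrix, Pi.sub_apply, zvec_apply h₀, zvec_apply (k := k + 1) (by omega),
    Fin.ext_iff, hk]
  split_ifs <;> grind

theorem cnAff_zeta_sub_self (hn : 2 ≤ n) (hb : b ≠ 0) (k : Fin (n + 1)) :
    zeta (cnAffParam n p k) k (cnAffPhi n p b k) - cnAffPhi n p b k =
      brk (cnAffParam n p k) 1 (fun m => cnAffMatrix n m k) := by
  rcases eq_or_ne (k : ℕ) 0 with h₀ | h₀
  · obtain rfl : k = 0 := Fin.ext h₀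
    have h₁ := Fin.val_one_of_ne_zero (n := n) (by omega)
    rw [cnAffParam_zero p, cnAffPhi_zero, cnAffMatrix_col_zero hn]
    refine zeta_brkPair_sub_self _ hb ?_ (zvec_apply_of_val_add_one_eq (by rw [Fin.val_zero, h₁]))
    rw [Pi.neg_apply, zvec_apply_of_val_add_one_eq (by rw [Fin.val_zero, h₁]), neg_neg]
  rcases eq_or_ne (k : ℕ) n with hl | hl
  · obtain rfl : k = Fin.last n := Fin.ext hl
    rw [cnAffParam_last p, cnAffPhi_last p b (by omega),
      cnAffMatrix_col_last hn]
    refine zeta_brkPair_sub_self _ hb (zvec_apply_self h₀) ?_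
    rw [Pi.neg_apply, zvec_apply_self h₀]
  · rw [cnAffParam_of_ne p h₀ hl, cnAffPhi_of_ne p b h₀ hl, cnAffMatrix_col_of_ne hn h₀ hl]
    have hk := Fin.val_add_one_of_val_ne hl
    exact zeta_brkPair_sub_self _ hb (zvec_apply_self h₀) (zvec_apply_of_val_add_one_eq hk.symm)

theorem zeta_cnAffPhi_of_far (hn : n ≠ 0) (c : ℂˣ) {k m : Fin (n + 1)}
    (h : (k : ℕ) + 2 ≤ m ∨ (m : ℕ) + 2 ≤ k) : zeta c m (cnAffPhi n p b k) = cnAffPhi n p b k := by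
  rcases eq_or_ne (k : ℕ) 0 with h₀ | h₀
  · obtain rfl : k = 0 := Fin.ext h₀
    have h₁ := Fin.val_one_of_ne_zero (n := n) (by omega)
    have hz : zvec 1 m = 0 := zvec_apply_of_val_ne (by omega) (by omega) (by omega)
    rw [cnAffPhi_zero]
    exact zeta_brkPair_of_apply_eq_zero _ _ _ (by rw [Pi.neg_apply, hz, neg_zero]) hz
  rcases eq_or_ne (k : ℕ) n with hl | hl
  · obtain rfl : k = Fin.last n := Fin.ext hl
    have hz : zvec (Fin.last n) m = 0 := zvec_apply_of_val_ne h₀ (by omega) (by omega)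
    rw [cnAffPhi_last p b (by omega)]
    exact zeta_brkPair_of_apply_eq_zero _ _ _ hz (by rw [Pi.neg_apply, hz, neg_zero])
  · have hk := Fin.val_add_one_of_val_ne hl
    rw [cnAffPhi_of_ne p b h₀ hl]
    exact zeta_brkPair_of_apply_eq_zero _ _ _ (zvec_apply_of_val_ne h₀ (by omega) (by omega))
      (zvec_apply_of_val_ne (by omega) (by omega) (by omega))

theorem cnAff_shiftCommute_succ (hn : 2 ≤ n) (hb : (b ^ 2 * ((p ^ 2 : ℂˣ) : ℂ)) ^ 2 = 1)
    {i : Fin (n + 1)} (hi : (i : ℕ) ≠ n) :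
    ShiftCommute (cnAffParam n p i) (cnAffParam n p (i + 1)) i (i + 1)
      (cnAffPhi n p b i) (cnAffPhi n p b (i + 1)) := by
  have hi₁ := Fin.val_add_one_of_val_ne hi
  rcases eq_or_ne (i : ℕ) 0 with h₀ | h₀
  · obtain rfl : i = 0 := Fin.ext h₀
    rw [zero_add] at hi₁ ⊢
    have hi₂ := Fin.val_add_one_of_val_ne (k := 1) (by omega)
    rw [cnAffParam_zero p, cnAffParam_of_ne p (by omega) (by omega),
      cnAffPhi_zero, cnAffPhi_of_ne p b (by omega) (by omega)]
    exact shiftCommute_start _ hb (zvec_apply_of_val_add_one_eq (by omega))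
      (zvec_apply_self (by omega)) (zvec_apply_of_val_ne (by omega) (by omega) (by omega))
  rcases eq_or_ne ((i : ℕ) + 1) n with hl | hl
  · have hlast : i + 1 = Fin.last n := Fin.ext (by rw [hi₁, Fin.val_last, hl])
    rw [cnAffPhi_of_ne p b h₀ hi, hlast, cnAffParam_of_ne p h₀ hi,
      cnAffParam_last p, cnAffPhi_last p b (by omega)]
    have hv := Fin.val_last n
    exact shiftCommute_end _ hb (zvec_apply_of_val_ne h₀ (by omega) (by omega))
      (zvec_apply_of_val_add_one_eq (by omega)) (zvec_apply_self (by omega))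
  · have hi₂ := Fin.val_add_one_of_val_ne (k := i + 1) (by omega)
    rw [cnAffParam_of_ne p h₀ hi, cnAffParam_of_ne p (by omega) (by omega),
      cnAffPhi_of_ne p b h₀ hi, cnAffPhi_of_ne p b (by omega) (by omega)]
    exact shiftCommute_middle _ _ (zvec_apply_of_val_ne h₀ (by omega) (by omega))
      (zvec_apply_of_val_add_one_eq hi₁.symm) (zvec_apply_self (by omega))
      (zvec_apply_of_val_ne (by omega) (by omega) (by omega))

theorem cnAff_shiftCommute (hn : 2 ≤ n) (hb : (b ^ 2 * ((p ^ 2 : ℂˣ) : ℂ)) ^ 2 = 1)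
    {i j : Fin (n + 1)} (hij : i ≠ j) :
    ShiftCommute (cnAffParam n p i) (cnAffParam n p j) i j
      (cnAffPhi n p b i) (cnAffPhi n p b j) := by
  wlog hlt : i < j generalizing i j
  · exact (this hij.symm (lt_of_le_of_ne (not_lt.1 hlt) hij.symm)).symm
  have hi : (i : ℕ) ≠ n := by have := Fin.lt_def.1 hlt; omega
  rcases (show (j : ℕ) = i + 1 ∨ (i : ℕ) + 2 ≤ j by have := Fin.lt_def.1 hlt; omega) with hj | hj
  · obtain rfl : j = i + 1 := Fin.ext (by rw [Fin.val_add_one_of_val_ne hi, hj])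
    exact cnAff_shiftCommute_succ p b hn hb hi
  · rw [ShiftCommute, zeta_cnAffPhi_of_far p b (by omega) _ (Or.inl hj),
      zeta_cnAffPhi_of_far p b (by omega) _ (Or.inr hj)]

theorem cnAff_shiftSystem (hn : 2 ≤ n) (hb : (b ^ 2 * ((p ^ 2 : ℂˣ) : ℂ)) ^ 2 = 1) :
    ShiftSystem (cnAffMatrix n) (cnAffParam n p) (cnAffPhi n p b) := by
  have hb₀ : b ≠ 0 := by rintro rfl; simp at hb
  exact ⟨cnAff_zeta_sub_self p b hn hb₀, fun i j hij => cnAff_shiftCommute p b hn hb hij⟩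

end CnAff

theorem shiftability_Cn_aff_general (n : ℕ) (hn : 2 ≤ n)
    (p : ℂˣ) (b : ℂ) (hb : b = (p : ℂ)⁻¹ ∨ b = Complex.I * (p : ℂ)⁻¹) :
    ShiftSystem
      (fun i j : Fin (n + 1) =>
        if i = j then 2
        else if (i : ℕ) = 0 ∧ (j : ℕ) = 1 then -1
        else if (i : ℕ) = 1 ∧ (j : ℕ) = 0 then -2
        else if (i : ℕ) = n - 1 ∧ (j : ℕ) = n then -2
        else if (i : ℕ) = n ∧ (j : ℕ) = n - 1 then -1
        else if (j : ℕ) = (i : ℕ) + 1 ∨ (i : ℕ) = (j : ℕ) + 1 then -1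
        else 0)
      (fun i : Fin (n + 1) => if (i : ℕ) = 0 ∨ (i : ℕ) = n then p ^ 4 else p ^ 2)
      (fun i : Fin (n + 1) =>
        if (i : ℕ) = 0 then
          brk ((p : ℂ) ^ 4) ((p : ℂ) ^ 4 * b) (xvec 0 - xvec 1) *
            brk ((p : ℂ) ^ 4) b (xvec 1 - xvec 0)
        else if (i : ℕ) = n then
          brk ((p : ℂ) ^ 4) ((p : ℂ) ^ 4 * b) (xvec i - xvec (i - 1)) *
            brk ((p : ℂ) ^ 4) b (xvec (i - 1) - xvec i)
        else
          brk ((p : ℂ) ^ 2) ((p : ℂ) ^ 2 * b) (xvec i - xvec (i - 1)) *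
            brk ((p : ℂ) ^ 2) b (xvec (i + 1) - xvec i)) := by
  have hb' : (b ^ 2 * ((p ^ 2 : ℂˣ) : ℂ)) ^ 2 = 1 := by
    have hp₀ : (p : ℂ) ≠ 0 := p.ne_zero
    rcases hb with rfl | rfl
    · push_cast; field_simp
    · push_cast; field_simp; exact Complex.I_pow_four
  exact cnAff_shiftSystem p b hn hb'

/-- For the affine Cartan matrix of type `C_n^{(1)}`, `n ≥ 2` (indexed by
`Fin (n+1)`, with `q_0 = q_n = p⁴` and `q_i = p²` otherwise), with `z_i = x_{i-1}⁻¹ x_i`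
for `1 ≤ i ≤ n`, the tuple `φ_0 = {p⁴·b·z_1⁻¹}_0·{b·z_1}_0`,
`φ_i = {p²·b·z_i}_i·{b·z_{i+1}}_i` (`1 ≤ i ≤ n−1`), `φ_n = {p⁴·b·z_n}_n·{b·z_n⁻¹}_n`
solves the shiftability system, for `b = p⁻¹` and for `b = ı·p⁻¹`. -/
theorem shiftability_Cn_aff (n : ℕ) (hn : 2 ≤ n)
    (p : ℂˣ) (hp : ∀ m : ℕ, 0 < m → p ^ m ≠ 1)
    (b : ℂ) (hb : b = (p : ℂ)⁻¹ ∨ b = Complex.I * (p : ℂ)⁻¹) :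
    ShiftSystem
      (fun i j : Fin (n + 1) =>
        if i = j then 2
        else if (i : ℕ) = 0 ∧ (j : ℕ) = 1 then -1
        else if (i : ℕ) = 1 ∧ (j : ℕ) = 0 then -2
        else if (i : ℕ) = n - 1 ∧ (j : ℕ) = n then -2
        else if (i : ℕ) = n ∧ (j : ℕ) = n - 1 then -1
        else if (j : ℕ) = (i : ℕ) + 1 ∨ (i : ℕ) = (j : ℕ) + 1 then -1
        else 0)
      (fun i : Fin (n + 1) => if (i : ℕ) = 0 ∨ (i : ℕ) = n then p ^ 4 else p ^ 2)
      (fun i : Fin (n + 1) =>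
        if (i : ℕ) = 0 then
          brk ((p : ℂ) ^ 4) ((p : ℂ) ^ 4 * b) (xvec 0 - xvec 1) *
            brk ((p : ℂ) ^ 4) b (xvec 1 - xvec 0)
        else if (i : ℕ) = n then
          brk ((p : ℂ) ^ 4) ((p : ℂ) ^ 4 * b) (xvec i - xvec (i - 1)) *
            brk ((p : ℂ) ^ 4) b (xvec (i - 1) - xvec i)
        else
          brk ((p : ℂ) ^ 2) ((p : ℂ) ^ 2 * b) (xvec i - xvec (i - 1)) *
            brk ((p : ℂ) ^ 2) b (xvec (i + 1) - xvec i)) :=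
  shiftability_Cn_aff_general n hn p b hb
end

section
/- Let I = {1,2} and let A be the Cartan matrix of type G_2: a_{11} = a_{22} = 2, a_{12} = -3, a_{21} = -1; set q_1 = p and q_2 = p^3. Then there exists no pair (φ_1, φ_2) ∈ 𝒜 × 𝒜 satisfying the shiftability system for A, i.e. there are no Laurent polynomials φ_1, φ_2 with ζ_1(φ_1) − φ_1 = {y_1}_1, ζ_2(φ_2) − φ_2 = {y_2}_2, and φ_1 φ_2 = ζ_2^{-1}(φ_1)·ζ_1^{-1}(φ_2). -/
/-!
The first two equations are solved coefficientwise: `ζ_i` scales the coefficient of `x^μ` by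
`q_i^{-μ_i}`, so off the line `μ₀ = 0` the only coefficients of `φ₁` are the (nonzero) ones at
`±(2,-1)`, and off the line `ν₁ = 0` those of `φ₂` are the (nonzero) ones at `±(-3,2)`. Comparing
the coefficients of `x^(A,B)` in the third equation then gives, for every `(A,B)`, a relation
between at most five products of coefficients, weighted by `1 - p^n`. Because the supports are
finite, these relations can be run downwards from the top of the support along the row `B = 1`
and the column `A = 3`; combined with the relations at `(3,1)`, `(1,1)`, `(3,-1)` and `(-1,1)` this
forces `φ₁(2,-1) φ₂(-3,2) = 0`, which is absurd.
-/

theorem val_zpow_eq_one_iff_of_not_isOfFinOrder {M : Type*} [Monoid M] {u : Mˣ}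
    (hu : ¬IsOfFinOrder u) {n : ℤ} : ((u ^ n : Mˣ) : M) = 1 ↔ n = 0 := by
  rw [Units.val_eq_one]
  exact ⟨fun h => by_contra fun hn => hu (isOfFinOrder_iff_zpow_eq_one.mpr ⟨n, hn, h⟩),
    fun h => by simp [h]⟩

theorem val_sub_inv_ne_zero_of_not_isOfFinOrder {K : Type*} [Field K] {u : Kˣ}
    (hu : ¬IsOfFinOrder u) : (u : K) - (u : K)⁻¹ ≠ 0 := by
  intro h
  have hsq : ((u ^ (2 : ℤ) : Kˣ) : K) = 1 := by
    rw [sub_eq_zero] at h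
    rw [Units.val_zpow_eq_zpow_val, zpow_two]
    nth_rw 2 [h]
    exact mul_inv_cancel₀ u.ne_zero
  exact two_ne_zero ((val_zpow_eq_one_iff_of_not_isOfFinOrder hu).mp hsq)

theorem Function.HasFiniteSupport.eq_zero_of_step {M : Type*} [Zero M] {h : ℤ → M}
    (hh : h.HasFiniteSupport) {N d : ℤ} (hd : 0 < d)
    (hstep : ∀ m, N ≤ m → h (m + d) = 0 → h m = 0) : ∀ m, N ≤ m → h m = 0 := by
  by_contra! hne
  have hfin : {m | N ≤ m ∧ h m ≠ 0}.Finite := hh.subset fun m hm => hm.2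
  obtain ⟨m, ⟨hNm, hm⟩, hmax⟩ := Set.exists_max_image _ id hfin hne
  refine hm (hstep m hNm (by_contra fun hmd => ?_))
  have := hmax (m + d) ⟨by omega, hmd⟩
  simp only [id] at this
  omega

theorem vec2_sub {α : Type*} [Sub α] (a₀ a₁ b₀ b₁ : α) :
    ![a₀, a₁] - ![b₀, b₁] = ![a₀ - b₀, a₁ - b₁] := by
  simp

section Coefficients

variable {ι : Type*}

theorem coeff_zeta (c : ℂˣ) (i : ι) (a : LaurentAlg ι) (μ : ι → ℤ) :
    (zeta c i a).coeff μ = ((c ^ (-μ i) : ℂˣ) : ℂ) * a.coeff μ := by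
  classical
  induction a using AddMonoidAlgebra.induction_linear with
  | zero => simp
  | add a b ha hb => simp [ha, hb, mul_add]
  | single ν r =>
    simp only [zeta, AddMonoidAlgebra.lift_single, zetaHom, MonoidHom.coe_mk, OneHom.coe_mk,
      toAdd_ofAdd, mono, AddMonoidAlgebra.coeff_smul, AddMonoidAlgebra.coeff_single,
      Finsupp.smul_apply, Finsupp.single_apply]
    split_ifs with h <;> simp [h, mul_comm]

open Classical in
theorem coeff_brk (s c : ℂ) (μ ν : ι → ℤ) :
    (brk s c μ : LaurentAlg ι).coeff ν =
      (s - s⁻¹)⁻¹ * ((if μ = ν then c else 0) - if -μ = ν then c⁻¹ else 0) := by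
  simp [brk, mono, AddMonoidAlgebra.coeff_smul, AddMonoidAlgebra.coeff_sub,
    AddMonoidAlgebra.coeff_single, Finsupp.single_apply]

theorem coeff_mul_eq_sum (f g : LaurentAlg ι) (lam : ι → ℤ) {S : Finset (ι → ℤ)}
    (hS : f.coeff.support ⊆ S) :
    (f * g).coeff lam = ∑ μ ∈ S, f.coeff μ * g.coeff (lam - μ) := by
  rw [AddMonoidAlgebra.coeff_mul_apply_left, Finsupp.sum_of_support_subset _ hS _ (by simp)]
  simp [neg_add_eq_sub]

end Coefficients

section ShiftEquation

variable {ι : Type*} {c : ℂˣ} {i : ι} {s : ℂ} {μ : ι → ℤ} {φ : LaurentAlg ι}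

open Classical in
theorem coeff_of_zeta_sub_self_eq_brk (h : zeta c i φ - φ = brk s 1 μ) (ν : ι → ℤ) :
    (((c ^ (-ν i) : ℂˣ) : ℂ) - 1) * φ.coeff ν =
      (s - s⁻¹)⁻¹ * ((if μ = ν then 1 else 0) - if -μ = ν then 1 else 0) := by
  have := congrArg (fun x => x.coeff ν) h
  simpa [AddMonoidAlgebra.coeff_sub, coeff_zeta, coeff_brk, sub_mul] using this

theorem coeff_eq_zero_of_zeta_sub_self_eq_brk (h : zeta c i φ - φ = brk s 1 μ)
    (hc : ¬IsOfFinOrder c) {ν : ι → ℤ} (hν : ν i ≠ 0) (hνμ : ν ≠ μ) (hνμ' : ν ≠ -μ) :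
    φ.coeff ν = 0 := by
  have hcν : ((c ^ (-ν i) : ℂˣ) : ℂ) - 1 ≠ 0 := by
    rw [sub_ne_zero, Ne, val_zpow_eq_one_iff_of_not_isOfFinOrder hc, neg_eq_zero]
    exact hν
  have key := coeff_of_zeta_sub_self_eq_brk h ν
  rw [if_neg (Ne.symm hνμ), if_neg (Ne.symm hνμ'), sub_zero, mul_zero] at key
  exact (mul_eq_zero.mp key).resolve_left hcν

theorem coeff_ne_zero_of_zeta_sub_self_eq_brk (h : zeta c i φ - φ = brk s 1 μ)
    (hs : s - s⁻¹ ≠ 0) (hμ : μ i ≠ 0) : φ.coeff μ ≠ 0 ∧ φ.coeff (-μ) ≠ 0 := by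
  have hμμ : -μ ≠ μ := fun h' => hμ <| by
    have := congrFun h' i
    simp only [Pi.neg_apply] at this
    omega
  constructor <;> intro h0
  · have key := coeff_of_zeta_sub_self_eq_brk h μ
    rw [h0, mul_zero, if_pos rfl, if_neg hμμ, sub_zero, mul_one] at key
    exact inv_ne_zero hs key.symm
  · have key := coeff_of_zeta_sub_self_eq_brk h (-μ)
    rw [h0, mul_zero, if_neg hμμ.symm, if_pos rfl, zero_sub, mul_neg_one, zero_eq_neg] at key
    exact inv_ne_zero hs key

end ShiftEquation

theorem sum_coeff_mul_one_sub_eq_zero {ι : Type*} {c d : ℂˣ} {i j : ι} {φ ψ : LaurentAlg ι}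
    (h : φ * ψ = zeta c j φ * zeta d i ψ) (lam : ι → ℤ) {S : Finset (ι → ℤ)}
    (hS : φ.coeff.support ⊆ S) :
    ∑ μ ∈ S, φ.coeff μ * ψ.coeff (lam - μ) *
      (1 - ((c ^ (-μ j) * d ^ (-(lam - μ) i) : ℂˣ) : ℂ)) = 0 := by
  have hS' : (zeta c j φ).coeff.support ⊆ S := fun μ hμ => hS <| by
    simp only [Finsupp.mem_support_iff, coeff_zeta] at hμ ⊢
    exact right_ne_zero_of_mul hμ
  have := congrArg (fun x => x.coeff lam) h
  simp only [coeff_mul_eq_sum _ _ _ hS, coeff_mul_eq_sum _ _ _ hS', coeff_zeta] at this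
  rw [← sub_eq_zero, ← Finset.sum_sub_distrib] at this
  rw [← this]
  refine Finset.sum_congr rfl fun μ _ => ?_
  push_cast
  ring

namespace G2

theorem five_term_relation {p : ℂˣ} {φ₁ φ₂ : LaurentAlg (Fin 2)}
    (hφ₁ : ∀ μ : Fin 2 → ℤ, μ 0 ≠ 0 → μ ≠ ![2, -1] → μ ≠ -![2, -1] → φ₁.coeff μ = 0)
    (hφ₂ : ∀ ν : Fin 2 → ℤ, ν 1 ≠ 0 → ν ≠ ![-3, 2] → ν ≠ -![-3, 2] → φ₂.coeff ν = 0)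
    (h : φ₁ * φ₂ = zeta (p ^ 3)⁻¹ 1 φ₁ * zeta p⁻¹ 0 φ₂) (A B : ℤ) :
    φ₁.coeff ![2, -1] * φ₂.coeff ![A - 2, B + 1] * (1 - ((p ^ (A - 5) : ℂˣ) : ℂ)) +
      φ₁.coeff ![-2, 1] * φ₂.coeff ![A + 2, B - 1] * (1 - ((p ^ (A + 5) : ℂˣ) : ℂ)) +
      φ₁.coeff ![0, B] * φ₂.coeff ![A, 0] * (1 - ((p ^ (3 * B + A) : ℂˣ) : ℂ)) +
      φ₁.coeff ![0, B - 2] * φ₂.coeff ![A, 2] * (1 - ((p ^ (3 * B + A - 6) : ℂˣ) : ℂ)) +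
      φ₁.coeff ![0, B + 2] * φ₂.coeff ![A, -2] * (1 - ((p ^ (3 * B + A + 6) : ℂˣ) : ℂ)) = 0 := by
  classical
  have hweight : ∀ a b : ℤ, ((p ^ 3)⁻¹ ^ (-a) * p⁻¹ ^ (-b) : ℂˣ) = p ^ (3 * a + b) := by
    intro a b
    rw [inv_zpow', neg_neg, inv_zpow', neg_neg, ← zpow_natCast, ← zpow_mul, zpow_add]
    norm_num
  set V : Finset (Fin 2 → ℤ) := {![2, -1], ![-2, 1], ![0, B], ![0, B - 2], ![0, B + 2]}
  have key := sum_coeff_mul_one_sub_eq_zero h ![A, B] (Finset.subset_union_left (s₂ := V))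
  rw [← Finset.sum_subset Finset.subset_union_right] at key
  · simp only [hweight] at key
    rw [Finset.sum_insert (by simp), Finset.sum_insert (by simp),
      Finset.sum_insert (by simp; omega), Finset.sum_insert (by simp; omega),
      Finset.sum_singleton] at key
    simp only [vec2_sub, Matrix.cons_val_zero, Matrix.cons_val_one] at key
    linear_combination (norm := ring_nf) key
  · intro μ _ hμV
    simp only [V, Finset.mem_insert, Finset.mem_singleton, not_or] at hμV
    obtain ⟨h₁, h₂, h₃, h₄, h₅⟩ := hμV
    by_cases hμ0 : μ 0 = 0
    · -- `φ₂` vanishes at `(A, B) - μ`, since its second coordinate is not `0` or `±2`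
      have hμ : μ = ![0, μ 1] := by ext i; fin_cases i <;> simp [hμ0]
      rw [hμ] at h₃ h₄ h₅ ⊢
      simp only [Matrix.vecCons_inj, true_and, and_true] at h₃ h₄ h₅
      rw [vec2_sub, hφ₂ _ (by simp; omega) (by simp; omega) (by simp; omega), mul_zero, zero_mul]
    · rw [hφ₁ μ hμ0 h₁ (by simpa using h₂), zero_mul, zero_mul]

/-! In the two lemmas below `α, β, f k, Φ x y` stand for the coefficients of `φ₁` at `(2,-1)`,
`(-2,1)`, `(0,k)`, of `φ₂` at `(x,y)`, and `e n` for `1 - p^n`; `hE` is `five_term_relation`. -/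

theorem Φ_one_zero_eq_zero {K : Type*} [CommRing K] [NoZeroDivisors K] {e : ℤ → K}
    (he : ∀ n, e n = 0 ↔ n = 0) {α β : K} {f : ℤ → K} {Φ : ℤ → ℤ → K}
    (hΦ : ∀ x y, y ≠ 0 → ¬(x = -3 ∧ y = 2) → ¬(x = 3 ∧ y = -2) → Φ x y = 0)
    (hf : f.HasFiniteSupport) (hg : (fun m => Φ m 0).HasFiniteSupport)
    (hE : ∀ A B, α * Φ (A - 2) (B + 1) * e (A - 5) + β * Φ (A + 2) (B - 1) * e (A + 5) +
      f B * Φ A 0 * e (3 * B + A) + f (B - 2) * Φ A 2 * e (3 * B + A - 6) +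
      f (B + 2) * Φ A (-2) * e (3 * B + A + 6) = 0) (hf1 : f 1 ≠ 0) : Φ 1 0 = 0 := by
  have hen : ∀ n, n ≠ 0 → e n ≠ 0 := fun n hn h => hn ((he n).mp h)
  have rel_row : ∀ m, 4 ≤ m → β * Φ (m + 2) 0 * e (m + 5) + f 1 * Φ m 0 * e (m + 3) = 0 := by
    intro m hm
    have := hE m 1
    rw [hΦ (m - 2) _ (by norm_num) (by omega) (by omega),
      hΦ m 2 (by norm_num) (by omega) (by omega),
      hΦ m (-2) (by norm_num) (by omega) (by omega)] at this
    linear_combination (norm := ring_nf) this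
  have rel_col : ∀ k, 2 ≤ k →
      f k * Φ 3 0 * e (3 * k + 3) + f (k + 2) * Φ 3 (-2) * e (3 * k + 9) = 0 := by
    intro k hk
    have := hE 3 k
    rw [hΦ (3 - 2) _ (by omega) (by omega) (by omega),
      hΦ (3 + 2) _ (by omega) (by omega) (by omega),
      hΦ 3 2 (by norm_num) (by omega) (by omega)] at this
    linear_combination (norm := ring_nf) this
  have rel_3_1 : β * Φ 5 0 * e 8 + f 1 * Φ 3 0 * e 6 + f 3 * Φ 3 (-2) * e 12 = 0 := by
    simpa [hΦ] using hE 3 1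
  have rel_1_1 : β * Φ 3 0 * e 6 + f 1 * Φ 1 0 * e 4 = 0 := by
    simpa [hΦ] using hE 1 1
  have hg5 : Φ 5 0 = 0 := by
    refine hg.eq_zero_of_step (N := 4) two_pos (fun m hm hm2 => ?_) 5 (by norm_num)
    by_contra hm0
    exact mul_ne_zero (mul_ne_zero hf1 hm0) (hen (m + 3) (by omega))
      (by linear_combination rel_row m hm - β * e (m + 5) * hm2)
  have hg3 : Φ 3 0 = 0 := by
    by_contra hg3
    have hf3 : f 3 = 0 := by
      refine hf.eq_zero_of_step (N := 2) two_pos (fun k hk hk2 => ?_) 3 (by norm_num)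
      by_contra hk0
      exact mul_ne_zero (mul_ne_zero hk0 hg3) (hen (3 * k + 3) (by omega))
        (by linear_combination rel_col k hk - Φ 3 (-2) * e (3 * k + 9) * hk2)
    exact mul_ne_zero (mul_ne_zero hf1 hg3) (hen 6 (by norm_num))
      (by linear_combination rel_3_1 - β * e 8 * hg5 - Φ 3 (-2) * e 12 * hf3)
  by_contra hg1
  exact mul_ne_zero (mul_ne_zero hf1 hg1) (hen 4 (by norm_num))
    (by linear_combination rel_1_1 - β * e 6 * hg3)

theorem false_of_five_term_relation {K : Type*} [CommRing K] [NoZeroDivisors K] {e : ℤ → K}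
    (he : ∀ n, e n = 0 ↔ n = 0) {α β : K} {f : ℤ → K} {Φ : ℤ → ℤ → K} (hα : α ≠ 0)
    (hγ : Φ (-3) 2 ≠ 0) (hδ : Φ 3 (-2) ≠ 0)
    (hΦ : ∀ x y, y ≠ 0 → ¬(x = -3 ∧ y = 2) → ¬(x = 3 ∧ y = -2) → Φ x y = 0)
    (hf : f.HasFiniteSupport) (hg : (fun m => Φ m 0).HasFiniteSupport)
    (hE : ∀ A B, α * Φ (A - 2) (B + 1) * e (A - 5) + β * Φ (A + 2) (B - 1) * e (A + 5) +
      f B * Φ A 0 * e (3 * B + A) + f (B - 2) * Φ A 2 * e (3 * B + A - 6) +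
      f (B + 2) * Φ A (-2) * e (3 * B + A + 6) = 0) : False := by
  have hen : ∀ n, n ≠ 0 → e n ≠ 0 := fun n hn h => hn ((he n).mp h)
  have rel_3_m1 : α * Φ 1 0 * e (-2) + f 1 * Φ 3 (-2) * e 6 = 0 := by
    simpa [(he 0).mpr rfl, hΦ] using hE 3 (-1)
  have rel_m1_1 : α * Φ (-3) 2 * e (-6) + β * Φ 1 0 * e 4 + f 1 * Φ (-1) 0 * e 2 = 0 := by
    simpa [hΦ] using hE (-1) 1
  have hg1 : Φ 1 0 = 0 := by
    by_contra hg1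
    refine hg1 (Φ_one_zero_eq_zero he hΦ hf hg hE fun hf1 => ?_)
    exact mul_ne_zero (mul_ne_zero hα hg1) (hen (-2) (by norm_num))
      (by linear_combination rel_3_m1 - Φ 3 (-2) * e 6 * hf1)
  have hf1 : f 1 = 0 := by
    by_contra hf1
    exact mul_ne_zero (mul_ne_zero hf1 hδ) (hen 6 (by norm_num))
      (by linear_combination rel_3_m1 - α * e (-2) * hg1)
  exact mul_ne_zero (mul_ne_zero hα hγ) (hen (-6) (by norm_num))
    (by linear_combination rel_m1_1 - β * e 4 * hg1 - Φ (-1) 0 * e 2 * hf1)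

end G2

/-- For the Cartan matrix of type `G_2` (indexed by `Fin 2`, `a_{12} = -3`,
`a_{21} = -1`, `q_1 = p`, `q_2 = p³`), the shiftability system has no solution: there are
no Laurent polynomials `φ_1, φ_2` with `ζ_1(φ_1) − φ_1 = {y_1}_1`,
`ζ_2(φ_2) − φ_2 = {y_2}_2` and `φ_1φ_2 = ζ_2⁻¹(φ_1)·ζ_1⁻¹(φ_2)`. -/
theorem no_shiftability_G2 (p : ℂˣ) (hp : ∀ m : ℕ, 0 < m → p ^ m ≠ 1) :
    ¬ ∃ φ₁ φ₂ : LaurentAlg (Fin 2),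
        zeta p 0 φ₁ - φ₁ =
            brk (p : ℂ) 1 (fun j : Fin 2 => if j = 0 then 2 else -1) ∧
        zeta (p ^ 3) 1 φ₂ - φ₂ =
            brk ((p : ℂ) ^ 3) 1 (fun j : Fin 2 => if j = 0 then -3 else 2) ∧
        φ₁ * φ₂ = zeta (p ^ 3)⁻¹ 1 φ₁ * zeta p⁻¹ 0 φ₂ := by
  rintro ⟨φ₁, φ₂, h₁, h₂, h₃⟩
  have hp₁ : ¬IsOfFinOrder p := by simpa [isOfFinOrder_iff_pow_eq_one] using hp
  have hp₃ : ¬IsOfFinOrder (p ^ 3) := fun h => hp₁ (h.of_pow three_ne_zero)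
  rw [show (fun j : Fin 2 => if j = 0 then (2 : ℤ) else -1) = ![2, -1] by
    ext j; fin_cases j <;> rfl] at h₁
  rw [show (fun j : Fin 2 => if j = 0 then (-3 : ℤ) else 2) = ![-3, 2] by
    ext j; fin_cases j <;> rfl, show (p : ℂ) ^ 3 = ((p ^ 3 : ℂˣ) : ℂ) by push_cast; rfl] at h₂
  obtain ⟨hα, -⟩ := coeff_ne_zero_of_zeta_sub_self_eq_brk h₁
    (val_sub_inv_ne_zero_of_not_isOfFinOrder hp₁) (by decide)
  obtain ⟨hγ, hδ⟩ := coeff_ne_zero_of_zeta_sub_self_eq_brk h₂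
    (val_sub_inv_ne_zero_of_not_isOfFinOrder hp₃) (by decide)
  refine G2.false_of_five_term_relation (e := fun n => 1 - ((p ^ n : ℂˣ) : ℂ))
    (fun n => sub_eq_zero.trans (eq_comm.trans (val_zpow_eq_one_iff_of_not_isOfFinOrder hp₁)))
    (f := fun k => φ₁.coeff ![0, k]) (Φ := fun x y => φ₂.coeff ![x, y]) hα hγ (by simpa using hδ)
    (fun x y hy h h' => ?_) ?_ ?_
    (G2.five_term_relation (fun μ => coeff_eq_zero_of_zeta_sub_self_eq_brk h₁ hp₁)
      (fun ν => coeff_eq_zero_of_zeta_sub_self_eq_brk h₂ hp₃) h₃)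
  · exact coeff_eq_zero_of_zeta_sub_self_eq_brk h₂ hp₃ (by simpa using hy)
      (by simpa using h) (by simpa using h')
  · exact φ₁.coeff.hasFiniteSupport.fun_comp_of_injective fun a b h => by simpa using congrFun h 1
  · exact φ₂.coeff.hasFiniteSupport.fun_comp_of_injective fun a b h => by simpa using congrFun h 0
end
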